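/- Suppose b: ℝ^d → ℝ^d is continuous, a: ℝ^d × ℝ^d → ℝ^{d×d} is a continuous positive semidefinite covariance kernel (so the diagonal entries satisfy the Kunita–Watanabe inequality and A(x,y) := a(x,x) − a(x,y) − a(y,x) + a(y,y) satisfies the segment-subadditivity of its trace), and there exists K ≥ 0 such that 2⟨b(x)−b(y), x−y⟩ + tr A(x,y) ≤ K|x−y|² for all x,y ∈ ℝ^d. Then 2⟨b(x), x⟩ + tr a(x,x) ≤ K|x|² + O(|x|) as |x| → ∞; in particular there is a constant c > 0 such that 2⟨b(x),x⟩ + tr a(x,x) ≤ c·max(|x|², 1) for all x, i.e. the coercivity condition (G_ρ) holds with ρ a positive multiple of u ↦ max(u,1). -/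

import Mathlib

/-!
Write `φ x = 2⟪b x, x⟫ + tr a(x,x)`. Testing the kernel against `e_i` at `x` and `-u e_i` at `y`
gives the Kunita–Watanabe bound `u (tr a(x,y) + tr a(y,x)) ≤ tr a(x,x) + u² tr a(y,y)`, hence
`u tr A(x,y) ≥ (u-1) tr a(x,x) - u(u-1) tr a(y,y)`. Feeding this with `u = s` into the one-sided
condition at the pair `(s w, w)`, `s > 1`, and dividing by `s - 1` yields
`φ(s w) ≤ s φ(w) + K s (s-1) ‖w‖²`. With `‖w‖ = 1` and `φ` bounded on the unit ball by
continuity, `φ x = O(‖x‖²)`.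
-/

open scoped RealInnerProductSpace BigOperators
open Matrix

noncomputable def secondDiff {d : ℕ}
    (a : EuclideanSpace ℝ (Fin d) → EuclideanSpace ℝ (Fin d) → Matrix (Fin d) (Fin d) ℝ)
    (x y : EuclideanSpace ℝ (Fin d)) : Matrix (Fin d) (Fin d) ℝ :=
  a x x - a x y - a y x + a y y

def IsPosSemidefKernel {X n : Type*} [Fintype n] [DecidableEq n] (a : X → X → Matrix n n ℝ) :
    Prop :=
  ∀ (m : ℕ) (z : Fin m → X) (v : Fin m → EuclideanSpace ℝ n),
    0 ≤ ∑ j : Fin m, ∑ k : Fin m, ⟪Matrix.toEuclideanLin (a (z j) (z k)) (v k), v j⟫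

section
variable {X n : Type*} [Fintype n] [DecidableEq n] {a : X → X → Matrix n n ℝ}

theorem inner_toEuclideanLin_single (M : Matrix n n ℝ) (i : n) :
    ⟪M.toEuclideanLin (EuclideanSpace.single i 1), EuclideanSpace.single i 1⟫ = M i i := by
  simp [EuclideanSpace.inner_single_right]

theorem IsPosSemidefKernel.diag_quadratic_nonneg (ha : IsPosSemidefKernel a) (x y : X)
    (t u : ℝ) (i : n) :
    0 ≤ t ^ 2 * a x x i i + t * u * (a x y i i + a y x i i) + u ^ 2 * a y y i i := by
  have h := ha 2 ![x, y] ![t • EuclideanSpace.single i 1, u • EuclideanSpace.single i 1]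
  simp only [Fin.sum_univ_two, Matrix.cons_val_zero, Matrix.cons_val_one,
    map_smul, inner_smul_left, inner_smul_right, conj_trivial, inner_toEuclideanLin_single] at h
  linarith

theorem IsPosSemidefKernel.mul_trace_add_trace_le (ha : IsPosSemidefKernel a) (x y : X) (u : ℝ) :
    u * ((a x y).trace + (a y x).trace) ≤ (a x x).trace + u ^ 2 * (a y y).trace := by
  simp only [Matrix.trace, Matrix.diag, Finset.mul_sum, ← Finset.sum_add_distrib]
  exact Finset.sum_le_sum fun i _ => by linarith [ha.diag_quadratic_nonneg x y 1 (-u) i]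

end

theorem norm_inv_norm_smul {E : Type*} [NormedAddCommGroup E] [NormedSpace ℝ E] {x : E}
    (hx : x ≠ 0) : ‖‖x‖⁻¹ • x‖ = 1 := by
  rw [norm_smul, norm_inv, norm_norm, inv_mul_cancel₀ (norm_ne_zero_iff.mpr hx)]

section

variable {d : ℕ} {a : EuclideanSpace ℝ (Fin d) → EuclideanSpace ℝ (Fin d) → Matrix (Fin d) (Fin d) ℝ}

theorem IsPosSemidefKernel.trace_secondDiff_ge (ha : IsPosSemidefKernel a)
    (x y : EuclideanSpace ℝ (Fin d)) (u : ℝ) :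
    (u - 1) * (a x x).trace - u * (u - 1) * (a y y).trace ≤ u * (secondDiff a x y).trace := by
  have h := ha.mul_trace_add_trace_le x y u
  simp only [secondDiff, Matrix.trace_add, Matrix.trace_sub]
  linarith

theorem inner_add_trace_smul_le_of_onesided (ha : IsPosSemidefKernel a)
    {b : EuclideanSpace ℝ (Fin d) → EuclideanSpace ℝ (Fin d)} {K : ℝ}
    (hone : ∀ x y : EuclideanSpace ℝ (Fin d),
      2 * ⟪b x - b y, x - y⟫ + (secondDiff a x y).trace ≤ K * ‖x - y‖ ^ 2)
    (w : EuclideanSpace ℝ (Fin d)) {s : ℝ} (hs : 1 < s) :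
    2 * ⟪b (s • w), s • w⟫ + (a (s • w) (s • w)).trace ≤
      s * (2 * ⟪b w, w⟫ + (a w w).trace) + K * s * (s - 1) * ‖w‖ ^ 2 := by
  have h := hone (s • w) w
  rw [show s • w - w = (s - 1) • w by rw [sub_smul, one_smul], inner_smul_right, inner_sub_left,
    norm_smul, mul_pow, Real.norm_eq_abs, sq_abs] at h
  have htr := ha.trace_secondDiff_ge (s • w) w s
  rw [inner_smul_right]
  refine le_of_mul_le_mul_left ?_ (sub_pos.mpr hs)
  linear_combination s * h + htr

theorem inner_add_trace_le_of_onesided (ha : IsPosSemidefKernel a)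
    {b : EuclideanSpace ℝ (Fin d) → EuclideanSpace ℝ (Fin d)} {K : ℝ}
    (hone : ∀ x y : EuclideanSpace ℝ (Fin d),
      2 * ⟪b x - b y, x - y⟫ + (secondDiff a x y).trace ≤ K * ‖x - y‖ ^ 2)
    {x : EuclideanSpace ℝ (Fin d)} (hx : 1 < ‖x‖) :
    2 * ⟪b x, x⟫ + (a x x).trace ≤
      ‖x‖ * (2 * ⟪b (‖x‖⁻¹ • x), ‖x‖⁻¹ • x⟫ + (a (‖x‖⁻¹ • x) (‖x‖⁻¹ • x)).trace) +
        K * ‖x‖ * (‖x‖ - 1) := by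
  have hx0 : x ≠ 0 := norm_pos_iff.mp (one_pos.trans hx)
  simpa only [smul_inv_smul₀ (norm_ne_zero_iff.mpr hx0), norm_inv_norm_smul hx0,
    one_pow, mul_one] using inner_add_trace_smul_le_of_onesided ha hone (‖x‖⁻¹ • x) hx

end

theorem coercivity_of_onesided_general {d : ℕ}
    (b : EuclideanSpace ℝ (Fin d) → EuclideanSpace ℝ (Fin d)) (hb : Continuous b)
    (a : EuclideanSpace ℝ (Fin d) → EuclideanSpace ℝ (Fin d) → Matrix (Fin d) (Fin d) ℝ)
    (ha_cont : Continuous fun p : EuclideanSpace ℝ (Fin d) × EuclideanSpace ℝ (Fin d) =>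
      a p.1 p.2)
    (ha_psd : ∀ (m : ℕ) (z : Fin m → EuclideanSpace ℝ (Fin d))
      (v : Fin m → EuclideanSpace ℝ (Fin d)),
      0 ≤ ∑ j : Fin m, ∑ k : Fin m, ⟪Matrix.toEuclideanLin (a (z j) (z k)) (v k), v j⟫)
    (K : ℝ)
    (hone : ∀ x y : EuclideanSpace ℝ (Fin d),
      2 * ⟪b x - b y, x - y⟫ + Matrix.trace (secondDiff a x y) ≤ K * ‖x - y‖ ^ 2) :
    ∃ c > (0 : ℝ), ∀ x : EuclideanSpace ℝ (Fin d),
      2 * ⟪b x, x⟫ + Matrix.trace (a x x) ≤ c * max (‖x‖ ^ 2) 1 := by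
  set φ := fun x => 2 * ⟪b x, x⟫ + (a x x).trace
  have hφ : Continuous φ :=
    (continuous_const.mul (hb.inner continuous_id)).add
      (ha_cont.comp (continuous_id.prodMk continuous_id)).matrix_trace
  obtain ⟨C, hC⟩ := (isCompact_closedBall (0 : EuclideanSpace ℝ (Fin d)) 1).bddAbove_image
    hφ.continuousOn
  have hφ_ball {x} (hx : ‖x‖ ≤ 1) : φ x ≤ max C 0 :=
    (hC ⟨x, by simpa using hx, rfl⟩).trans (le_max_left _ _)
  refine ⟨max K 0 + max C 0 + 1, by positivity, fun x => ?_⟩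
  rcases le_or_gt ‖x‖ 1 with hx | hx
  · calc φ x ≤ max K 0 + max C 0 + 1 := by linarith [hφ_ball hx, le_max_right K 0]
      _ ≤ _ := le_mul_of_one_le_right (by positivity) (le_max_right _ _)
  have hradial := inner_add_trace_le_of_onesided ha_psd hone hx
  set s := ‖x‖
  have hs0 : 0 < s := one_pos.trans hx
  have hK_le : K * s * (s - 1) ≤ max K 0 * s ^ 2 := by
    nlinarith [le_max_left K 0, le_max_right K 0, mul_pos hs0 (sub_pos.mpr hx)]
  have hC_le : max C 0 * s ≤ max C 0 * s ^ 2 :=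
    mul_le_mul_of_nonneg_left (by nlinarith) (le_max_right C 0)
  have hφ_unit := hφ_ball (norm_inv_norm_smul (norm_pos_iff.mp hs0)).le
  calc φ x ≤ (max K 0 + max C 0) * s ^ 2 := by
        linarith [mul_le_mul_of_nonneg_left hφ_unit hs0.le]
    _ ≤ _ := by rw [max_eq_left (one_le_pow₀ hx.le)]; linarith [sq_nonneg s]

/-- the global one-sided (monotonicity) condition with constant `K` implies
the coercivity condition `2⟨b(x),x⟩ + tr a(x,x) ≤ c·max(|x|²,1)`, i.e. (G_ρ) with `ρ` a
positive multiple of `u ↦ max(u,1)`. -/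
theorem coercivity_of_onesided {d : ℕ}
    (b : EuclideanSpace ℝ (Fin d) → EuclideanSpace ℝ (Fin d)) (hb : Continuous b)
    (a : EuclideanSpace ℝ (Fin d) → EuclideanSpace ℝ (Fin d) → Matrix (Fin d) (Fin d) ℝ)
    (ha_cont : Continuous fun p : EuclideanSpace ℝ (Fin d) × EuclideanSpace ℝ (Fin d) =>
      a p.1 p.2)
    (ha_symm : ∀ x y, (a x y)ᵀ = a y x)
    (ha_psd : ∀ (m : ℕ) (z : Fin m → EuclideanSpace ℝ (Fin d))
      (v : Fin m → EuclideanSpace ℝ (Fin d)),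
      0 ≤ ∑ j : Fin m, ∑ k : Fin m, ⟪Matrix.toEuclideanLin (a (z j) (z k)) (v k), v j⟫)
    (K : ℝ) (hK : 0 ≤ K)
    (hone : ∀ x y : EuclideanSpace ℝ (Fin d),
      2 * ⟪b x - b y, x - y⟫ + Matrix.trace (secondDiff a x y) ≤ K * ‖x - y‖ ^ 2) :
    ∃ c > (0 : ℝ), ∀ x : EuclideanSpace ℝ (Fin d),
      2 * ⟪b x, x⟫ + Matrix.trace (a x x) ≤ c * max (‖x‖ ^ 2) 1 :=
  coercivity_of_onesided_general b hb a ha_cont ha_psd K hone
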